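/- arXiv:1106.5358 — 4 statements merged into one kernel-verified Lean document; each statement's English description precedes it below -/
import Mathlib

section
/- The addition operators of the Abelian sandpile model commute: for any finite connected multigraph G with sink s and any vertices x, y ∈ V, a_x ∘ a_y = a_y ∘ a_x on the set of stable configurations, where a_x(η) is the stabilization of η + δ_x. -/
/-- Degree of `x` in the multigraph: edges to the sink plus edges to non-sink vertices. -/
def sandDeg {V : Type*} [Fintype V] (a : V → V → ℕ) (aS : V → ℕ) (x : V) : ℕ :=
  aS x + ∑ y, a x y

/-- The result of toppling the vertex `x`: `x` loses `deg_G x - a x x` particles and each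
non-sink vertex `y ≠ x` gains `a x y` particles (particles sent to the sink are lost). -/
def toppleAt {V : Type*} [Fintype V] [DecidableEq V]
    (a : V → V → ℕ) (aS : V → ℕ) (x : V) (η : V → ℕ) : V → ℕ :=
  fun y => if y = x then η x + a x x - sandDeg a aS x else η y + a x y

/-- A single legal toppling step. -/
def LegalStep {V : Type*} [Fintype V] [DecidableEq V]
    (a : V → V → ℕ) (aS : V → ℕ) (η η' : V → ℕ) : Prop :=
  ∃ x : V, sandDeg a aS x ≤ η x ∧ η' = toppleAt a aS x η

/-- A configuration is stable when every non-sink vertex has fewer particles than its degree. -/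
def SandStable {V : Type*} [Fintype V] (a : V → V → ℕ) (aS : V → ℕ) (η : V → ℕ) : Prop :=
  ∀ x : V, η x < sandDeg a aS x

/-- Adding one particle at `x`. -/
def addOne {V : Type*} [DecidableEq V] (η : V → ℕ) (x : V) : V → ℕ :=
  Function.update η x (η x + 1)

/-!
Legal topplings at distinct vertices commute and do not spoil each other's legality, so the
toppling relation has the diamond property and, by Church–Rosser, a configuration has at most
one stable configuration reachable from it. Adding a particle commutes with legal topplings,
so both `a_x (a_y η)` and `a_y (a_x η)` are stable configurations reachable from
`η + δ_x + δ_y`, hence equal.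
-/

namespace Sandpile

open Relation

variable {V : Type*} [DecidableEq V]

lemma le_addOne (η : V → ℕ) (z w : V) : η w ≤ addOne η z w := by
  unfold addOne
  by_cases hwz : w = z
  · subst hwz
    simp
  · simp [Function.update_of_ne hwz]

lemma addOne_comm (η : V → ℕ) (x y : V) : addOne (addOne η x) y = addOne (addOne η y) x := by
  funext w
  simp only [addOne, Function.update]
  by_cases hwx : w = x <;> by_cases hwy : w = y <;> simp_all

variable [Fintype V] (a : V → V → ℕ) (aS : V → ℕ)

lemma toppleAt_of_ne {x z : V} (hzx : z ≠ x) (η : V → ℕ) :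
    toppleAt a aS x η z = η z + a x z := by
  simp only [toppleAt, if_neg hzx]

lemma toppleAt_comm {x z : V} (hxz : x ≠ z) {η : V → ℕ}
    (hx : sandDeg a aS x ≤ η x) (hz : sandDeg a aS z ≤ η z) :
    toppleAt a aS z (toppleAt a aS x η) = toppleAt a aS x (toppleAt a aS z η) := by
  funext w
  simp only [toppleAt]
  by_cases hwz : w = z <;> by_cases hwx : w = x <;> simp_all <;> omega

lemma legalStep_diamond {η η₁ η₂ : V → ℕ} (h₁ : LegalStep a aS η η₁)
    (h₂ : LegalStep a aS η η₂) :
    ∃ ζ, ReflGen (LegalStep a aS) η₁ ζ ∧ ReflTransGen (LegalStep a aS) η₂ ζ := by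
  obtain ⟨x, hx, rfl⟩ := h₁
  obtain ⟨z, hz, rfl⟩ := h₂
  by_cases hxz : x = z
  · subst hxz
    exact ⟨_, .refl, .refl⟩
  refine ⟨toppleAt a aS z (toppleAt a aS x η), .single ⟨z, ?_, rfl⟩, .single ⟨x, ?_, ?_⟩⟩
  · rw [toppleAt_of_ne a aS (Ne.symm hxz)]
    omega
  · rw [toppleAt_of_ne a aS hxz]
    omega
  · exact toppleAt_comm a aS hxz hx hz

lemma eq_of_reflTransGen_sandStable {η σ : V → ℕ} (hσ : SandStable a aS σ)
    (h : ReflTransGen (LegalStep a aS) σ η) : η = σ :=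
  (reflTransGen_iff_eq fun _ ⟨x, hx, _⟩ => (hσ x).not_ge hx).mp h

theorem sandStable_unique {η σ σ' : V → ℕ}
    (h : ReflTransGen (LegalStep a aS) η σ) (h' : ReflTransGen (LegalStep a aS) η σ')
    (hσ : SandStable a aS σ) (hσ' : SandStable a aS σ') : σ = σ' := by
  obtain ⟨ζ, hσζ, hσ'ζ⟩ :=
    church_rosser (fun _ _ _ => legalStep_diamond a aS) h h'
  rw [← eq_of_reflTransGen_sandStable a aS hσ hσζ,
    eq_of_reflTransGen_sandStable a aS hσ' hσ'ζ]

lemma toppleAt_addOne (z : V) {x : V} {η : V → ℕ} (hx : sandDeg a aS x ≤ η x) :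
    toppleAt a aS x (addOne η z) = addOne (toppleAt a aS x η) z := by
  funext w
  simp only [toppleAt, addOne, Function.update]
  by_cases hwz : w = z <;> by_cases hwx : w = x <;> by_cases hzx : z = x <;> simp_all <;> omega

lemma legalStep_addOne (z : V) {η η' : V → ℕ} (h : LegalStep a aS η η') :
    LegalStep a aS (addOne η z) (addOne η' z) := by
  obtain ⟨x, hx, rfl⟩ := h
  exact ⟨x, hx.trans (le_addOne η z x), (toppleAt_addOne a aS z hx).symm⟩

lemma reflTransGen_addOne (z : V) {η η' : V → ℕ} (h : ReflTransGen (LegalStep a aS) η η') :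
    ReflTransGen (LegalStep a aS) (addOne η z) (addOne η' z) :=
  ReflTransGen.lift (fun ζ => addOne ζ z) (fun _ _ => legalStep_addOne a aS z) _ _ h

end Sandpile

open Sandpile in
theorem stmt_1_general {V : Type*} [Fintype V] [DecidableEq V]
    (a : V → V → ℕ) (aS : V → ℕ)
    (St : (V → ℕ) → (V → ℕ))
    (hSt : ∀ η : V → ℕ, SandStable a aS (St η) ∧
      Relation.ReflTransGen (LegalStep a aS) η (St η))
    (η : V → ℕ) (x y : V) :
    St (addOne (St (addOne η y)) x) = St (addOne (St (addOne η x)) y) := by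
  have hyx := (reflTransGen_addOne a aS x (hSt (addOne η y)).2).trans (hSt _).2
  have hxy := (reflTransGen_addOne a aS y (hSt (addOne η x)).2).trans (hSt _).2
  rw [addOne_comm] at hxy
  exact sandStable_unique a aS hyx hxy (hSt _).1 (hSt _).1

/-- the addition operators of the Abelian sandpile model commute: for any
finite connected multigraph `G` with sink `s` and any vertices `x, y`,
`a_x ∘ a_y = a_y ∘ a_x` on stable configurations, where `a_x η` is the stabilization
of `η + δ_x`.  Here `St` is any stabilization map, i.e. any map producing a stable
configuration reachable from the input by finitely many legal topplings. -/
theorem stmt_1 {V : Type*} [Fintype V] [DecidableEq V]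
    (a : V → V → ℕ) (aS : V → ℕ)
    (hsymm : ∀ x y : V, a x y = a y x)
    (hconn : ∀ x : V, ∃ y : V,
      Relation.ReflTransGen (fun u v => 0 < a u v) x y ∧ 0 < aS y)
    (St : (V → ℕ) → (V → ℕ))
    (hSt : ∀ η : V → ℕ, SandStable a aS (St η) ∧
      Relation.ReflTransGen (LegalStep a aS) η (St η))
    (η : V → ℕ) (hη : SandStable a aS η) (x y : V) :
    St (addOne (St (addOne η y)) x) = St (addOne (St (addOne η x)) y) :=
  stmt_1_general a aS St hSt η x y
end

section
/- Stabilization is well-defined: for a finite connected multigraph G with sink s, any configuration η ∈ ℕ^V stabilizes in finitely many legal topplings, and the resulting stable configuration is independent of the order in which topplings are performed. -/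
/-!
Toppling at distinct vertices commutes and keeps the other vertex legal, so legal toppling is
locally confluent and, once it terminates, normal forms are unique (Church–Rosser).

Termination: a toppling at `x` loses `aS x` grains to the sink, so along an infinite legal
sequence the total mass bounds every entry and eventually only vertices not adjacent to the sink
topple. If `v` topples infinitely often and `a v u > 0`, then `u` topples infinitely often too:
otherwise `u` would eventually only gain grains, and infinitely often strictly, which the mass
bound forbids. Following a path from such a `v` to a vertex adjacent to the sink gives a
contradiction.
-/

open Filter Relation

lemma Nat.not_frequently_lt_succ_of_bounded {u : ℕ → ℕ} {C : ℕ} (hC : ∀ n, u n ≤ C)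
    (hmono : ∀ᶠ n in atTop, u n ≤ u (n + 1)) : ¬ ∃ᶠ n in atTop, u n < u (n + 1) := by
  intro hinc
  obtain ⟨N, hN⟩ := eventually_atTop.mp hmono
  have hv : Monotone fun k => u (N + k) := monotone_nat_of_le_succ fun k => hN _ (by omega)
  have hgrow : ∀ c, ∃ k, c ≤ u (N + k) := by
    intro c
    induction c with
    | zero => exact ⟨0, Nat.zero_le _⟩
    | succ c ih =>
      obtain ⟨k, hk⟩ := ih
      obtain ⟨m, hm, hlt⟩ := frequently_atTop.mp hinc (N + k)
      obtain ⟨j, rfl⟩ := Nat.exists_eq_add_of_le (show N ≤ m by omega)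
      have hkj : u (N + k) ≤ u (N + j) := hv (show k ≤ j by omega)
      exact ⟨j + 1, by rw [← add_assoc]; omega⟩
  obtain ⟨k, hk⟩ := hgrow (C + 1)
  have := hC (N + k)
  omega

section Toppling

variable {V : Type*} [Fintype V] [DecidableEq V] (a : V → V → ℕ) (aS : V → ℕ)

lemma toppleAt_of_ne {x y : V} (h : y ≠ x) (η : V → ℕ) :
    toppleAt a aS x η y = η y + a x y := if_neg h

lemma toppleAt_comm {x y : V} (hxy : x ≠ y) {η : V → ℕ}
    (hx : sandDeg a aS x ≤ η x) (hy : sandDeg a aS y ≤ η y) :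
    toppleAt a aS y (toppleAt a aS x η) = toppleAt a aS x (toppleAt a aS y η) := by
  funext z
  simp only [toppleAt]
  by_cases hzx : z = x <;> by_cases hzy : z = y <;> simp [hzx, hzy, hxy, hxy.symm] <;> omega

lemma sum_toppleAt_add (x : V) {η : V → ℕ} (hx : sandDeg a aS x ≤ η x) :
    ∑ z, toppleAt a aS x η z + aS x = ∑ z, η z := by
  have hrest : ∑ z ∈ {x}ᶜ, toppleAt a aS x η z =
      ∑ z ∈ {x}ᶜ, η z + ∑ z ∈ {x}ᶜ, a x z := by
    rw [← Finset.sum_add_distrib]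
    exact Finset.sum_congr rfl fun z hz =>
      toppleAt_of_ne a aS (Finset.mem_compl.mp hz ∘ Finset.mem_singleton.mpr) η
  have hdeg : sandDeg a aS x = aS x + (a x x + ∑ z ∈ {x}ᶜ, a x z) := by
    rw [sandDeg, Fintype.sum_eq_add_sum_compl x]
  rw [Fintype.sum_eq_add_sum_compl x, Fintype.sum_eq_add_sum_compl x η, hrest]
  simp only [toppleAt, ↓reduceIte]
  omega

lemma sandStable_iff_forall_not_legalStep {η : V → ℕ} :
    SandStable a aS η ↔ ∀ η', ¬ LegalStep a aS η η' := by
  simp only [SandStable, LegalStep, not_exists, not_and, ← not_le]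
  exact ⟨fun h η' x hx _ => h x hx, fun h x hx => h _ x hx rfl⟩

lemma legalStep_diamond (η η₁ η₂ : V → ℕ) (h₁ : LegalStep a aS η η₁)
    (h₂ : LegalStep a aS η η₂) :
    ∃ ξ, ReflGen (LegalStep a aS) η₁ ξ ∧
      ReflTransGen (LegalStep a aS) η₂ ξ := by
  obtain ⟨x, hx, rfl⟩ := h₁
  obtain ⟨y, hy, rfl⟩ := h₂
  by_cases hxy : x = y
  · subst hxy
    exact ⟨_, .refl, .refl⟩
  refine ⟨toppleAt a aS y (toppleAt a aS x η), .single ⟨y, ?_, rfl⟩,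
    .single ⟨x, ?_, toppleAt_comm a aS hxy hx hy⟩⟩
  · rw [toppleAt_of_ne a aS (Ne.symm hxy)]
    omega
  · rw [toppleAt_of_ne a aS hxy]
    omega

lemma SandStable.eq_of_reflTransGen {ξ ξ' : V → ℕ} (hξ : SandStable a aS ξ)
    (hr : ReflTransGen (LegalStep a aS) ξ ξ') : ξ' = ξ :=
  (hr.cases_head.resolve_right fun ⟨c, hc, _⟩ =>
    (sandStable_iff_forall_not_legalStep a aS).mp hξ c hc).symm

lemma exists_sandStable_of_wellFounded (hwf : WellFounded (flip (LegalStep a aS)))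
    (η : V → ℕ) : ∃ ξ, SandStable a aS ξ ∧ ReflTransGen (LegalStep a aS) η ξ := by
  obtain ⟨ξ, hξ, hmin⟩ := hwf.has_min {ξ | ReflTransGen (LegalStep a aS) η ξ}
    ⟨η, .refl⟩
  refine ⟨ξ, (sandStable_iff_forall_not_legalStep a aS).mpr fun ξ' h => ?_, hξ⟩
  exact hmin ξ' (hξ.tail h) h

end Toppling

namespace LegalSeq

variable {V : Type*} [Fintype V] [DecidableEq V] {a : V → V → ℕ} {aS : V → ℕ}
  {f : ℕ → V → ℕ} {x : ℕ → V}

lemma sum_add_sum_range (hx : ∀ n, sandDeg a aS (x n) ≤ f n (x n))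
    (hf : ∀ n, f (n + 1) = toppleAt a aS (x n) (f n)) (n : ℕ) :
    ∑ z, f n z + ∑ k ∈ Finset.range n, aS (x k) = ∑ z, f 0 z := by
  induction n with
  | zero => simp
  | succ n ih =>
    rw [Finset.sum_range_succ, hf n, ← sum_toppleAt_add a aS (x n) (hx n)] at *
    omega

lemma le_sum_zero (hx : ∀ n, sandDeg a aS (x n) ≤ f n (x n))
    (hf : ∀ n, f (n + 1) = toppleAt a aS (x n) (f n)) (n : ℕ) (u : V) :
    f n u ≤ ∑ z, f 0 z :=
  calc f n u ≤ ∑ z, f n z :=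
        Finset.single_le_sum (fun _ _ => Nat.zero_le _) (Finset.mem_univ u)
    _ ≤ ∑ z, f 0 z := by have := sum_add_sum_range hx hf n; omega

lemma eventually_aS_eq_zero (hx : ∀ n, sandDeg a aS (x n) ≤ f n (x n))
    (hf : ∀ n, f (n + 1) = toppleAt a aS (x n) (f n)) :
    ∀ᶠ n in atTop, aS (x n) = 0 := by
  have hbdd := Nat.not_frequently_lt_succ_of_bounded
    (u := fun n => ∑ k ∈ Finset.range n, aS (x k)) (C := ∑ z, f 0 z)
    (fun n => by have := sum_add_sum_range hx hf n; omega)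
    (.of_forall fun n => by simp only [Finset.sum_range_succ]; omega)
  filter_upwards [not_frequently.mp hbdd] with n hn
  simp only [Finset.sum_range_succ] at hn
  omega

lemma frequently_eq_of_adj (hx : ∀ n, sandDeg a aS (x n) ≤ f n (x n))
    (hf : ∀ n, f (n + 1) = toppleAt a aS (x n) (f n)) {v u : V}
    (hv : ∃ᶠ n in atTop, x n = v) (hvu : 0 < a v u) : ∃ᶠ n in atTop, x n = u := by
  by_contra hu
  have hgain : ∀ᶠ n in atTop, f (n + 1) u = f n u + a (x n) u := by
    filter_upwards [not_frequently.mp hu] with n hn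
    rw [hf n, toppleAt_of_ne a aS (Ne.symm hn)]
  refine Nat.not_frequently_lt_succ_of_bounded (le_sum_zero hx hf · u)
    (hgain.mono fun n h => by omega) ?_
  refine (hv.and_eventually hgain).mono fun n ⟨hxn, h⟩ => ?_
  rw [h, hxn]
  omega

end LegalSeq

lemma not_exists_legalStep_seq {V : Type*} [Fintype V] [DecidableEq V]
    (a : V → V → ℕ) (aS : V → ℕ)
    (hconn : ∀ x : V, ∃ y : V, ReflTransGen (fun u v => 0 < a u v) x y ∧ 0 < aS y) :
    ¬ ∃ f : ℕ → V → ℕ, ∀ n, LegalStep a aS (f n) (f (n + 1)) := by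
  rintro ⟨f, hstep⟩
  choose x hx hf using hstep
  obtain ⟨v, hv⟩ : ∃ v, ∃ᶠ n in atTop, x n = v :=
    frequently_exists.mp (.of_forall fun n => ⟨x n, rfl⟩)
  obtain ⟨y, hpath, hy⟩ := hconn v
  have hyfreq : ∃ᶠ n in atTop, x n = y := by
    clear hy
    induction hpath with
    | refl => exact hv
    | tail _ hadj ih => exact LegalSeq.frequently_eq_of_adj hx hf ih hadj
  obtain ⟨n, hxn, hzero⟩ :=
    (hyfreq.and_eventually (LegalSeq.eventually_aS_eq_zero hx hf)).exists
  rw [hxn] at hzero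
  omega

theorem stmt_2_general {V : Type*} [Fintype V] [DecidableEq V]
    (a : V → V → ℕ) (aS : V → ℕ)
    (hconn : ∀ x : V, ∃ y : V,
      Relation.ReflTransGen (fun u v => 0 < a u v) x y ∧ 0 < aS y)
    (η : V → ℕ) :
    (∃ ξ : V → ℕ, SandStable a aS ξ ∧
        Relation.ReflTransGen (LegalStep a aS) η ξ) ∧
    (∀ ξ₁ ξ₂ : V → ℕ, SandStable a aS ξ₁ → SandStable a aS ξ₂ →
        Relation.ReflTransGen (LegalStep a aS) η ξ₁ →
        Relation.ReflTransGen (LegalStep a aS) η ξ₂ → ξ₁ = ξ₂) ∧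
    ¬ ∃ f : ℕ → (V → ℕ), f 0 = η ∧ ∀ n : ℕ, LegalStep a aS (f n) (f (n + 1)) := by
  have hinf := not_exists_legalStep_seq a aS hconn
  have hwf : WellFounded (flip (LegalStep a aS)) :=
    wellFounded_iff_isEmpty_descending_chain.mpr ⟨fun ⟨f, hf⟩ => hinf ⟨f, hf⟩⟩
  refine ⟨exists_sandStable_of_wellFounded a aS hwf η, fun ξ₁ ξ₂ h₁ h₂ r₁ r₂ => ?_,
    fun ⟨f, _, hf⟩ => hinf ⟨f, hf⟩⟩
  obtain ⟨ξ, hξ₁, hξ₂⟩ := church_rosser (legalStep_diamond a aS) r₁ r₂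
  rw [← h₁.eq_of_reflTransGen a aS hξ₁, ← h₂.eq_of_reflTransGen a aS hξ₂]

/-- stabilization is well-defined: any configuration `η ∈ ℕ^V` on a finite
connected multigraph with sink reaches a stable configuration by finitely many legal
topplings, the stable configuration reached is independent of the order of topplings,
and there is no infinite sequence of legal topplings started from `η`. -/
theorem stmt_2 {V : Type*} [Fintype V] [DecidableEq V]
    (a : V → V → ℕ) (aS : V → ℕ)
    (hsymm : ∀ x y : V, a x y = a y x)
    (hconn : ∀ x : V, ∃ y : V,
      Relation.ReflTransGen (fun u v => 0 < a u v) x y ∧ 0 < aS y)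
    (η : V → ℕ) :
    (∃ ξ : V → ℕ, SandStable a aS ξ ∧
        Relation.ReflTransGen (LegalStep a aS) η ξ) ∧
    (∀ ξ₁ ξ₂ : V → ℕ, SandStable a aS ξ₁ → SandStable a aS ξ₂ →
        Relation.ReflTransGen (LegalStep a aS) η ξ₁ →
        Relation.ReflTransGen (LegalStep a aS) η ξ₂ → ξ₁ = ξ₂) ∧
    ¬ ∃ f : ℕ → (V → ℕ), f 0 = η ∧ ∀ n : ℕ, LegalStep a aS (f n) (f (n + 1)) :=
  stmt_2_general a aS hconn η
end

section
/- In the Burning Algorithm on a finite connected multigraph G with sink s applied to a stable configuration η, no vertex that burns at some finite time can belong to any forbidden subconfiguration: for every i ≥ 1, every x ∈ B(i), and every nonempty F ⊆ V with x ∈ F, the restriction η_F is not a forbidden subconfiguration. -/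
/-- `deg_F x = ∑_{y ∈ F} a y x`, the degree of `x` within the vertex set `F`. -/
def degIn {V : Type*} (a : V → V → ℕ) (F : Finset V) (x : V) : ℕ := ∑ y ∈ F, a y x

/-- Unburnt sets of the Burning Algorithm: `U 0 = V`,
`U (i+1) = {x ∈ U i : η x < deg_{U i} x}`. -/
def Uset {V : Type*} [Fintype V] [DecidableEq V] (a : V → V → ℕ) (η : V → ℕ) :
    ℕ → Finset V
  | 0 => Finset.univ
  | n + 1 => (Uset a η n).filter fun x => η x < degIn a (Uset a η n) x

/-- Burning sets: `B 0 = ∅` (the sink burns at time `0`),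
`B (i+1) = {x ∈ U i : η x ≥ deg_{U i} x}` is the set burning at time `i+1`. -/
def Bset {V : Type*} [Fintype V] [DecidableEq V] (a : V → V → ℕ) (η : V → ℕ) :
    ℕ → Finset V
  | 0 => ∅
  | n + 1 => (Uset a η n).filter fun x => degIn a (Uset a η n) x ≤ η x

/-!
A forbidden subconfiguration `F` is never burnt: every `z ∈ F` satisfies
`η z < deg_F z ≤ deg_{U i} z` as long as `F ⊆ U i`, so `F` survives each step of the
algorithm and stays inside every `U i`. A vertex of `F` therefore can never satisfy the
burning condition `deg_{U i} x ≤ η x`.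
-/

theorem degIn_mono {V : Type*} (a : V → V → ℕ) {F G : Finset V} (h : F ⊆ G) (x : V) :
    degIn a F x ≤ degIn a G x :=
  Finset.sum_le_sum_of_subset h

section BurningAlgorithm

variable {V : Type*} [Fintype V] [DecidableEq V] (a : V → V → ℕ) (η : V → ℕ)

theorem subset_Uset_of_forall_lt_degIn {F : Finset V} (hF : ∀ z ∈ F, η z < degIn a F z) :
    ∀ n, F ⊆ Uset a η n
  | 0 => Finset.subset_univ F
  | n + 1 => fun z hz => Finset.mem_filter.mpr
      ⟨subset_Uset_of_forall_lt_degIn hF n hz,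
        (hF z hz).trans_le (degIn_mono a (subset_Uset_of_forall_lt_degIn hF n) z)⟩

theorem degIn_le_of_mem_Bset_succ {n : ℕ} {x : V} (hx : x ∈ Bset a η (n + 1)) :
    degIn a (Uset a η n) x ≤ η x :=
  (Finset.mem_filter.mp hx).2

end BurningAlgorithm

theorem stmt_3_general {V : Type*} [Fintype V] [DecidableEq V]
    (a : V → V → ℕ)
    (η : V → ℕ) :
    ∀ i : ℕ, 1 ≤ i → ∀ x ∈ Bset a η i, ∀ F : Finset V, x ∈ F →
      ¬ (∀ z ∈ F, η z < degIn a F z) := by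
  rintro (_ | n) hi x hx F hxF hFSC
  · omega
  have hburn := degIn_le_of_mem_Bset_succ a η hx
  have hsurvive := degIn_mono a (subset_Uset_of_forall_lt_degIn a η hFSC n) x
  have hforbidden := hFSC x hxF
  omega

/-- in the Burning Algorithm applied to a stable configuration `η`, no
vertex burning at some finite time `i ≥ 1` can be part of any forbidden
subconfiguration: for every `i ≥ 1`, `x ∈ B(i)` and nonempty `F ⊆ V` containing `x`,
the restriction `η_F` is not an FSC (i.e. not all `z ∈ F` satisfy `η z < deg_F z`). -/
theorem stmt_3 {V : Type*} [Fintype V] [DecidableEq V]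
    (a : V → V → ℕ) (aS : V → ℕ)
    (hsymm : ∀ x y : V, a x y = a y x)
    (hconn : ∀ x : V, ∃ y : V,
      Relation.ReflTransGen (fun u v => 0 < a u v) x y ∧ 0 < aS y)
    (η : V → ℕ) (hstable : ∀ x : V, η x < sandDeg a aS x) :
    ∀ i : ℕ, 1 ≤ i → ∀ x ∈ Bset a η i, ∀ F : Finset V, x ∈ F →
      ¬ (∀ z ∈ F, η z < degIn a F z) :=
  stmt_3_general a η
end

section
/- In the Majumdar–Dhar construction, for an allowed stable configuration η and any vertex x burning at time i ≥ 1, the height η_x lies in the interval K_x = {deg_G(x) − n_x, …, deg_G(x) − n_x + |P_x| − 1}, where n_x is the number of edges (with multiplicity) from x to vertices burnt strictly before time i, and P_x is the set of oriented edges from x to vertices burning at time i − 1. -/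
section Burning

variable {V : Type*} [Fintype V] [DecidableEq V] (a : V → V → ℕ) (η : V → ℕ)

theorem sandDeg_eq_add_sum_compl_add_degIn (aS : V → ℕ) (hsymm : ∀ x y : V, a x y = a y x)
    (F : Finset V) (x : V) :
    sandDeg a aS x = aS x + ∑ y ∈ Finset.univ \ F, a y x + degIn a F x := by
  rw [sandDeg, degIn, add_assoc, Finset.sum_sdiff F.subset_univ]
  simp only [hsymm x]

theorem mem_Uset_succ {i : ℕ} {x : V} :
    x ∈ Uset a η (i + 1) ↔ x ∈ Uset a η i ∧ η x < degIn a (Uset a η i) x :=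
  Finset.mem_filter

theorem mem_Bset_succ {i : ℕ} {x : V} :
    x ∈ Bset a η (i + 1) ↔ x ∈ Uset a η i ∧ degIn a (Uset a η i) x ≤ η x :=
  Finset.mem_filter

theorem degIn_Uset_eq_degIn_Uset_succ_add_degIn_Bset_succ (i : ℕ) (x : V) :
    degIn a (Uset a η i) x = degIn a (Uset a η (i + 1)) x + degIn a (Bset a η (i + 1)) x := by
  simp only [degIn, Uset, Bset, ← not_lt]
  exact (Finset.sum_filter_add_sum_filter_not _ _ _).symm

theorem lt_degIn_Uset_add_of_mem_Uset (aS : V → ℕ) (hsymm : ∀ x y : V, a x y = a y x)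
    (hstable : ∀ x : V, η x < sandDeg a aS x) {i : ℕ} {x : V} (hx : x ∈ Uset a η i) :
    η x < degIn a (Uset a η i) x + if i = 0 then aS x else degIn a (Bset a η i) x := by
  cases i with
  | zero =>
    have hdeg := sandDeg_eq_add_sum_compl_add_degIn a aS hsymm (Uset a η 0) x
    simp only [Uset, Finset.sdiff_self, Finset.sum_empty, if_pos] at hdeg ⊢
    have := hstable x
    omega
  | succ j =>
    rw [if_neg j.succ_ne_zero, ← degIn_Uset_eq_degIn_Uset_succ_add_degIn_Bset_succ]
    exact ((mem_Uset_succ a η).mp hx).2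

end Burning

theorem stmt_6_general {V : Type*} [Fintype V] [DecidableEq V]
    (a : V → V → ℕ) (aS : V → ℕ)
    (hsymm : ∀ x y : V, a x y = a y x)
    (η : V → ℕ) (hstable : ∀ x : V, η x < sandDeg a aS x) :
    ∀ (i : ℕ) (x : V), x ∈ Bset a η (i + 1) →
      sandDeg a aS x ≤ η x + (aS x + ∑ y ∈ Finset.univ \ Uset a η i, a y x) ∧
      η x + (aS x + ∑ y ∈ Finset.univ \ Uset a η i, a y x) <
        sandDeg a aS x + (if i = 0 then aS x else ∑ y ∈ Bset a η i, a y x) := by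
  intro i x hx
  obtain ⟨hxU, hburns⟩ := (mem_Bset_succ a η).mp hx
  have hdeg := sandDeg_eq_add_sum_compl_add_degIn a aS hsymm (Uset a η i) x
  have hunburnt := lt_degIn_Uset_add_of_mem_Uset a η aS hsymm hstable hxU
  simp only [degIn] at hburns hdeg hunburnt
  exact ⟨by omega, by omega⟩

/-- in the Majumdar–Dhar construction, for an allowed stable configuration
`η` and a vertex `x` burning at time `i + 1 ≥ 1`, the height `η x` lies in
`K_x = {deg_G x − n_x, …, deg_G x − n_x + |P_x| − 1}`, where
`n_x = aS x + ∑_{y ∉ U(i)} a y x` is the number of edges (with multiplicity) from `x`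
to vertices burnt strictly before time `i + 1` (including the sink), and `|P_x|` is the
number of edges from `x` to the set burning at time `i` (which is `{s}` when `i = 0`).
The two inequalities are stated additively to avoid truncated subtraction. -/
theorem stmt_6 {V : Type*} [Fintype V] [DecidableEq V]
    (a : V → V → ℕ) (aS : V → ℕ)
    (hsymm : ∀ x y : V, a x y = a y x)
    (hconn : ∀ x : V, ∃ y : V,
      Relation.ReflTransGen (fun u v => 0 < a u v) x y ∧ 0 < aS y)
    (η : V → ℕ) (hstable : ∀ x : V, η x < sandDeg a aS x)
    (hallowed : ∀ F : Finset V, F.Nonempty → ¬ (∀ z ∈ F, η z < degIn a F z)) :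
    ∀ (i : ℕ) (x : V), x ∈ Bset a η (i + 1) →
      sandDeg a aS x ≤ η x + (aS x + ∑ y ∈ Finset.univ \ Uset a η i, a y x) ∧
      η x + (aS x + ∑ y ∈ Finset.univ \ Uset a η i, a y x) <
        sandDeg a aS x + (if i = 0 then aS x else ∑ y ∈ Bset a η i, a y x) :=
  stmt_6_general a aS hsymm η hstable
end
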